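/- Fan multiplicativity of flattening bounds: if φ = ⊗_{i=1}^m φ_i where φ_i ∈ H_A^{(i)} ⊗ H_B^{(i)} ⊗ H_{C_i} (a fan of m edges all sharing parties A = ⊗_i H_A^{(i)} and B = ⊗_i H_B^{(i)} but with disjoint third parties C_i), then for any generalized flattening maps P_i : H_{C_i} → H_{X_i}⊗H_{Y_i}, the flattening rank factorizes: rk(φ^{(P)}) = Π_{i=1}^m rk(φ_i^{(P_i)}), and hence R(φ) ≥ Π_i rk(φ_i^{(P_i)})/CR(P_i). -/

import Mathlib

/-!
For a fan, the multiflattening is, after regrouping its row and column indices, the Kronecker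
product of the edge flattenings. Rank is multiplicative under Kronecker products: write each
matrix as `C * R` through its rank, with `C` left- and `R` right-invertible; the Kronecker
products of the `C`s, of the `R`s and of their one-sided inverses give both inequalities. For the bound, the multiflattening is linear
in `φ`, and a simple tensor `u ⊗ v ⊗ (⊗ᵢ wᵢ)` flattens to a rescaled copy of the Kronecker
product of the matrices `Pᵢ wᵢ`, of rank at most `∏ᵢ CR(Pᵢ)`; subadditivity of rank finishes.
-/

/-- The commutative rank `CR(P)` of a generalized flattening map
`P : H_C → H_X ⊗ H_Y` (in coordinates): the maximum Schmidt rank of `P c`. -/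
noncomputable def commRank {γ δ ρ : Type*} [Fintype δ] [Fintype ρ]
    (P : (γ → ℂ) →ₗ[ℂ] (δ × ρ → ℂ)) : ℕ :=
  ⨆ c : γ → ℂ, (Matrix.of fun (d : δ) (r : ρ) => P c (d, r)).rank

/-- The generalized flattening `(1 ⊗ P) φᵢ` of a single edge tensor
`φᵢ ∈ H_A ⊗ H_B ⊗ H_C`, as a 2-tensor (matrix) between `A X` and `B Y`. -/
noncomputable def edgeFlattening {α β γ δ ρ : Type*} [Fintype γ] [DecidableEq γ]
    (P : (γ → ℂ) →ₗ[ℂ] (δ × ρ → ℂ)) (φ : α → β → γ → ℂ) :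
    Matrix (α × δ) (β × ρ) ℂ :=
  Matrix.of fun p q => ∑ g : γ, P (Pi.single g 1) (p.2, q.2) * φ p.1 q.1 g

/-- The generalized multiflattening of `φ ∈ H_A ⊗ H_B ⊗ ⨂ᵢ H_{Cᵢ}` (in
coordinates), as a matrix between `A X₁…X_m` and `B Y₁…Y_m`. -/
noncomputable def multiFlattening {ι α β : Type*} [Fintype ι] [DecidableEq ι]
    {γ δ ρ : ι → Type*} [∀ i, Fintype (γ i)] [∀ i, DecidableEq (γ i)]
    (P : ∀ i, (γ i → ℂ) →ₗ[ℂ] (δ i × ρ i → ℂ))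
    (φ : α → β → (∀ i, γ i) → ℂ) :
    Matrix (α × ∀ i, δ i) (β × ∀ i, ρ i) ℂ :=
  Matrix.of fun p q =>
    ∑ g : ∀ i, γ i, (∏ i, P i (Pi.single (g i) 1) (p.2 i, q.2 i)) * φ p.1 q.1 g

namespace Matrix

section Rank

variable {K : Type*} [Field K] {m n : Type*} [Fintype n]

theorem rank_add_le (A B : Matrix m n K) : (A + B).rank ≤ A.rank + B.rank := by
  have hrange : LinearMap.range (A + B).mulVecLin ≤
      LinearMap.range A.mulVecLin ⊔ LinearMap.range B.mulVecLin := by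
    rintro _ ⟨v, rfl⟩
    exact Submodule.mem_sup.mpr ⟨A *ᵥ v, ⟨v, rfl⟩, B *ᵥ v, ⟨v, rfl⟩, (add_mulVec A B v).symm⟩
  exact (Submodule.finrank_mono hrange).trans
    (Submodule.finrank_add_le_finrank_add_finrank _ _)

theorem rank_sum_le {η : Type*} (s : Finset η) (M : η → Matrix m n K) :
    (∑ t ∈ s, M t).rank ≤ ∑ t ∈ s, (M t).rank :=
  Finset.sum_hom_rel (r := fun (A : Matrix m n K) (k : ℕ) => A.rank ≤ k) (by simp)
    fun _ _ _ h => (rank_add_le _ _).trans (by gcongr)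

theorem exists_rank_factorization [Fintype m] (M : Matrix m n K) :
    ∃ (C : Matrix m (Fin M.rank) K) (R : Matrix (Fin M.rank) n K)
      (X : Matrix (Fin M.rank) m K) (Y : Matrix n (Fin M.rank) K),
      M = C * R ∧ X * C = 1 ∧ R * Y = 1 := by
  classical
  let V := LinearMap.range M.mulVecLin
  let b : V ≃ₗ[K] (Fin M.rank → K) := (Module.finBasisOfFinrankEq K V rfl).equivFun
  let C := V.subtype ∘ₗ b.symm.toLinearMap
  let R := b.toLinearMap ∘ₗ M.mulVecLin.rangeRestrict
  have hC : Function.Injective C := V.injective_subtype.comp b.symm.injective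
  have hR : Function.Surjective R := b.surjective.comp M.mulVecLin.surjective_rangeRestrict
  obtain ⟨X, hX⟩ := C.exists_leftInverse_of_injective (LinearMap.ker_eq_bot.mpr hC)
  obtain ⟨Y, hY⟩ := R.exists_rightInverse_of_surjective (LinearMap.range_eq_top.mpr hR)
  have hCR : C ∘ₗ R = M.mulVecLin := LinearMap.ext fun v => by simp [C, R]
  refine ⟨C.toMatrix', R.toMatrix', X.toMatrix', Y.toMatrix', ?_, ?_, ?_⟩
  · rw [← LinearMap.toMatrix'_comp, hCR, ← toLin'_apply', LinearMap.toMatrix'_toLin']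
  · rw [← LinearMap.toMatrix'_comp, hX, LinearMap.toMatrix'_id]
  · rw [← LinearMap.toMatrix'_comp, hY, LinearMap.toMatrix'_id]

theorem rank_of_mul_mul_le [Fintype m] (x : m → K) (y : n → K) (M : Matrix m n K) :
    (of fun p q => x p * y q * M p q).rank ≤ M.rank := by
  classical
  have hdiag : of (fun p q => x p * y q * M p q) = diagonal x * M * diagonal y := by
    ext p q
    simp only [of_apply, mul_diagonal, diagonal_mul]
    ring
  rw [hdiag]
  exact (rank_mul_le_left _ _).trans (rank_mul_le_right _ _)

end Rank

section PiKronecker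

variable {ι R : Type*} [Fintype ι] [CommSemiring R] {l m n : ι → Type*}

def piKronecker (M : ∀ i, Matrix (m i) (n i) R) : Matrix (∀ i, m i) (∀ i, n i) R :=
  of fun p q => ∏ i, M i (p i) (q i)

@[simp]
theorem piKronecker_apply (M : ∀ i, Matrix (m i) (n i) R) (p : ∀ i, m i) (q : ∀ i, n i) :
    piKronecker M p q = ∏ i, M i (p i) (q i) :=
  rfl

theorem piKronecker_mul [DecidableEq ι] [∀ i, Fintype (m i)] (M : ∀ i, Matrix (l i) (m i) R)
    (N : ∀ i, Matrix (m i) (n i) R) :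
    piKronecker M * piKronecker N = piKronecker fun i => M i * N i := by
  ext p q
  simp only [mul_apply, piKronecker_apply, Fintype.prod_sum, Finset.prod_mul_distrib]

theorem piKronecker_one [∀ i, DecidableEq (m i)] :
    piKronecker (fun i => (1 : Matrix (m i) (m i) R)) = 1 := by
  ext p q
  by_cases h : p = q
  · subst h; simp
  · obtain ⟨i, hi⟩ := Function.ne_iff.mp h
    rw [piKronecker_apply, one_apply_ne h]
    exact Finset.prod_eq_zero (Finset.mem_univ i) (one_apply_ne hi)

theorem rank_piKronecker {K : Type*} [Field K] [DecidableEq ι] [∀ i, Fintype (m i)]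
    [∀ i, Fintype (n i)] (M : ∀ i, Matrix (m i) (n i) K) :
    (piKronecker M).rank = ∏ i, (M i).rank := by
  choose C R X Y hCR hX hY using fun i => exists_rank_factorization (M i)
  have hcard : Fintype.card (∀ i, Fin (M i).rank) = ∏ i, (M i).rank := by simp
  apply le_antisymm
  · have hfac : piKronecker M = piKronecker C * piKronecker R := by
      rw [piKronecker_mul]; exact congrArg piKronecker (funext hCR)
    calc (piKronecker M).rank ≤ (piKronecker R).rank := hfac ▸ rank_mul_le_right _ _
      _ ≤ Fintype.card (∀ i, Fin (M i).rank) := rank_le_card_height _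
      _ = _ := hcard
  · have hsandwich : piKronecker X * piKronecker M * piKronecker Y = 1 := by
      rw [piKronecker_mul, piKronecker_mul, ← piKronecker_one]
      congr 1
      ext1 i
      calc X i * M i * Y i = X i * (C i * R i) * Y i := congrArg (X i * · * Y i) (hCR i)
        _ = X i * C i * (R i * Y i) := by simp only [Matrix.mul_assoc]
        _ = 1 := by rw [hX, hY, Matrix.one_mul]
    calc ∏ i, (M i).rank = (1 : Matrix (∀ i, Fin (M i).rank) _ K).rank := by
          rw [rank_one, hcard]
      _ = (piKronecker X * piKronecker M * piKronecker Y).rank := by rw [hsandwich]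
      _ ≤ (piKronecker M).rank :=
          (rank_mul_le_left _ _).trans (rank_mul_le_right _ _)

end PiKronecker

end Matrix

open Matrix

theorem LinearMap.sum_apply_single_mul {R γ κ : Type*} [CommSemiring R] [Fintype γ]
    [DecidableEq γ] (f : (γ → R) →ₗ[R] (κ → R)) (x : γ → R) (k : κ) :
    ∑ c, f (Pi.single c 1) k * x c = f x k := by
  conv_rhs => rw [← Finset.univ_sum_single x, map_sum, Finset.sum_apply]
  refine Finset.sum_congr rfl fun c _ => ?_
  have hsingle : Pi.single c (x c) = x c • Pi.single c (1 : R) := by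
    rw [← Pi.single_smul', smul_eq_mul, mul_one]
  rw [hsingle, map_smul, Pi.smul_apply, smul_eq_mul, mul_comm]

section Flattening

variable {ι : Type*} [Fintype ι] [DecidableEq ι] {α β : Type*} {γ δ ρ : ι → Type*}
  [∀ i, Fintype (γ i)] [∀ i, DecidableEq (γ i)]

theorem edgeFlattening_apply {γ δ ρ : Type*} [Fintype γ] [DecidableEq γ]
    (P : (γ → ℂ) →ₗ[ℂ] (δ × ρ → ℂ)) (φ : α → β → γ → ℂ) (a : α) (d : δ) (b : β) (r : ρ) :
    edgeFlattening P φ (a, d) (b, r) = P (φ a b) (d, r) :=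
  P.sum_apply_single_mul (φ a b) (d, r)

theorem multiFlattening_prod_apply (P : ∀ i, (γ i → ℂ) →ₗ[ℂ] (δ i × ρ i → ℂ))
    (f : α → β → ∀ i, γ i → ℂ) (p : α × ∀ i, δ i) (q : β × ∀ i, ρ i) :
    multiFlattening P (fun a b g => ∏ i, f a b i (g i)) p q =
      ∏ i, P i (f p.1 q.1 i) (p.2 i, q.2 i) := by
  simp only [multiFlattening, of_apply, ← Finset.prod_mul_distrib]
  rw [← Fintype.prod_sum fun i c => P i (Pi.single c 1) (p.2 i, q.2 i) * f p.1 q.1 i c]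
  simp only [LinearMap.sum_apply_single_mul]

theorem multiFlattening_mul_left_apply (P : ∀ i, (γ i → ℂ) →ₗ[ℂ] (δ i × ρ i → ℂ))
    (c : α → β → ℂ) (φ : α → β → (∀ i, γ i) → ℂ) (p : α × ∀ i, δ i) (q : β × ∀ i, ρ i) :
    multiFlattening P (fun a b g => c a b * φ a b g) p q = c p.1 q.1 * multiFlattening P φ p q := by
  simp only [multiFlattening, of_apply, Finset.mul_sum]
  exact Finset.sum_congr rfl fun _ _ => by ring

theorem multiFlattening_sum {η : Type*} (s : Finset η) (P : ∀ i, (γ i → ℂ) →ₗ[ℂ] (δ i × ρ i → ℂ))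
    (φ : η → α → β → (∀ i, γ i) → ℂ) :
    multiFlattening P (fun a b g => ∑ t ∈ s, φ t a b g) = ∑ t ∈ s, multiFlattening P (φ t) := by
  ext p q
  simp only [multiFlattening, of_apply, Matrix.sum_apply, Finset.mul_sum]
  exact Finset.sum_comm

theorem multiFlattening_fan {A B : ι → Type*} (P : ∀ i, (γ i → ℂ) →ₗ[ℂ] (δ i × ρ i → ℂ))
    (φ : ∀ i, A i → B i → γ i → ℂ) :
    multiFlattening P (fun (a : ∀ i, A i) (b : ∀ i, B i) g => ∏ i, φ i (a i) (b i) (g i)) =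
      (piKronecker fun i => edgeFlattening (P i) (φ i)).submatrix
        (Equiv.arrowProdEquivProdArrow ι A δ).symm (Equiv.arrowProdEquivProdArrow ι B ρ).symm := by
  ext p q
  simp [multiFlattening_prod_apply (f := fun (a : ∀ i, A i) (b : ∀ i, B i) i => φ i (a i) (b i)),
    edgeFlattening_apply]

theorem rank_le_commRank {γ δ ρ : Type*} [Fintype δ] [Fintype ρ]
    (P : (γ → ℂ) →ₗ[ℂ] (δ × ρ → ℂ)) (c : γ → ℂ) :
    (of fun d r => P c (d, r)).rank ≤ commRank P :=
  le_ciSup (f := fun c => (of fun d r => P c (d, r)).rank)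
    ⟨Fintype.card δ, by rintro _ ⟨c, rfl⟩; exact rank_le_card_height _⟩ c

theorem rank_multiFlattening_simple_le [Fintype α] [Fintype β] [∀ i, Fintype (δ i)]
    [∀ i, Fintype (ρ i)] (P : ∀ i, (γ i → ℂ) →ₗ[ℂ] (δ i × ρ i → ℂ)) (u : α → ℂ) (v : β → ℂ)
    (w : ∀ i, γ i → ℂ) :
    (multiFlattening P (fun a b g => u a * v b * ∏ i, w i (g i))).rank ≤ ∏ i, commRank (P i) := by
  set Q := piKronecker fun i => of fun d r => P i (w i) (d, r)
  have hsimple : multiFlattening P (fun a b g => u a * v b * ∏ i, w i (g i)) =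
      of fun p q => u p.1 * v q.1 * Q.submatrix Prod.snd Prod.snd p q := by
    ext p q
    rw [multiFlattening_mul_left_apply P (fun a b => u a * v b),
      multiFlattening_prod_apply (f := fun _ _ => w)]
    simp [Q]
  calc _ ≤ (Q.submatrix Prod.snd Prod.snd).rank := hsimple ▸ rank_of_mul_mul_le _ _ _
    _ ≤ Q.rank := rank_submatrix_le _ _ _
    _ = ∏ i, (of fun d r => P i (w i) (d, r)).rank := rank_piKronecker _
    _ ≤ ∏ i, commRank (P i) := Finset.prod_le_prod' fun i _ => rank_le_commRank (P i) (w i)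

end Flattening

/-- Fan multiplicativity of flattening bounds: for a fan `φ = ⊗ᵢ φᵢ` of edges all
sharing parties `A = ⊗ᵢ Aᵢ` and `B = ⊗ᵢ Bᵢ` but with disjoint third parties `Cᵢ`,
the flattening rank factorizes, `rk(φ^{(P)}) = ∏ᵢ rk(φᵢ^{(Pᵢ)})`, and hence any
decomposition of `φ` into `s` simple tensors (w.r.t. the parties `A, B, C₁, …, C_m`)
satisfies `∏ᵢ rk(φᵢ^{(Pᵢ)}) ≤ s · ∏ᵢ CR(Pᵢ)`. -/
theorem fan_flattening_multiplicative {ι : Type*} [Fintype ι] [DecidableEq ι]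
    {A B γ δ ρ : ι → Type*} [∀ i, Fintype (A i)] [∀ i, Fintype (B i)]
    [∀ i, Fintype (γ i)] [∀ i, DecidableEq (γ i)] [∀ i, Fintype (δ i)]
    [∀ i, Fintype (ρ i)]
    (P : ∀ i, (γ i → ℂ) →ₗ[ℂ] (δ i × ρ i → ℂ))
    (φ : ∀ i, A i → B i → γ i → ℂ) :
    (multiFlattening P
          (fun (a : ∀ i, A i) (b : ∀ i, B i) (g : ∀ i, γ i) =>
            ∏ i, φ i (a i) (b i) (g i))).rank =
      ∏ i, (edgeFlattening (P i) (φ i)).rank ∧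
    ∀ (s : ℕ) (u : Fin s → (∀ i, A i) → ℂ) (v : Fin s → (∀ i, B i) → ℂ)
      (w : Fin s → ∀ i, γ i → ℂ),
      (∀ (a : ∀ i, A i) (b : ∀ i, B i) (g : ∀ i, γ i), (∏ i, φ i (a i) (b i) (g i)) = ∑ t, u t a * v t b * ∏ i, w t i (g i)) →
      ∏ i, (edgeFlattening (P i) (φ i)).rank ≤ s * ∏ i, commRank (P i) := by
  have hrank : (multiFlattening P
        (fun (a : ∀ i, A i) (b : ∀ i, B i) (g : ∀ i, γ i) => ∏ i, φ i (a i) (b i) (g i))).rank =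
      ∏ i, (edgeFlattening (P i) (φ i)).rank := by
    rw [multiFlattening_fan, rank_submatrix, rank_piKronecker]
  refine ⟨hrank, fun s u v w hφ => ?_⟩
  have hφ' : (fun (a : ∀ i, A i) (b : ∀ i, B i) (g : ∀ i, γ i) => ∏ i, φ i (a i) (b i) (g i)) =
      fun a b g => ∑ t, u t a * v t b * ∏ i, w t i (g i) :=
    funext₃ hφ
  calc ∏ i, (edgeFlattening (P i) (φ i)).rank
      = (∑ t, multiFlattening P fun a b g => u t a * v t b * ∏ i, w t i (g i)).rank := by
        rw [← hrank, hφ', multiFlattening_sum]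
    _ ≤ ∑ t, (multiFlattening P fun a b g => u t a * v t b * ∏ i, w t i (g i)).rank :=
        rank_sum_le _ _
    _ ≤ ∑ _t : Fin s, ∏ i, commRank (P i) :=
        Finset.sum_le_sum fun t _ => rank_multiFlattening_simple_le P (u t) (v t) (w t)
    _ = s * ∏ i, commRank (P i) := by simp
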